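/- Let (Λ,Γ) be a CRN all of whose rules are (2,0) void rules, let C be a configuration over Λ, and let u ∈ Λ. Then: (i) for every terminal configuration T' reachable from C + {u}, there exists a terminal configuration T reachable from C such that Σ_{s∈Λ} |T(s) − T'(s)| ≤ 1; and (ii) if C contains at least one copy of u, then for every terminal configuration T' reachable from C − {u}, there exists a terminal configuration T reachable from C such that Σ_{s∈Λ} |T(s) − T'(s)| ≤ 1. In particular, adding or removing one copy of a species changes the attainable count of any fixed species by at most one. -/
import Mathlib


/-! ### Chemical Reaction Networks (CRNs) and step CRNs -/

/-- A reaction rule: an ordered pair of multisets (reactants, products). -/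
structure Rule (Λ : Type) where
  reactants : Multiset Λ
  products : Multiset Λ
deriving DecidableEq

namespace Rule

/-- A `(2,0)` void rule: exactly two reactants and no products. -/
def IsVoid20 {Λ : Type} (R : Rule Λ) : Prop :=
  Multiset.card R.reactants = 2 ∧ R.products = 0

/-- A `(2,1)` catalytic rule: two reactants, one product which is one of the reactants. -/
def IsCat21 {Λ : Type} (R : Rule Λ) : Prop :=
  Multiset.card R.reactants = 2 ∧ Multiset.card R.products = 1 ∧ R.products ≤ R.reactants

/-- A void rule: the products form a strict submultiset of the reactants. -/
def IsVoid {Λ : Type} (R : Rule Λ) : Prop := R.products < R.reactants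

end Rule

/-- A single rule application: some rule of `Γ` is applicable to `C` and transforms it to `C'`. -/
def RStep {Λ : Type} [DecidableEq Λ] (Γ : Finset (Rule Λ)) (C C' : Multiset Λ) : Prop :=
  ∃ R ∈ Γ, R.reactants ≤ C ∧ C' = C - R.reactants + R.products

/-- Reachability: the reflexive-transitive closure of single rule application. -/
def Reaches {Λ : Type} [DecidableEq Λ] (Γ : Finset (Rule Λ)) : Multiset Λ → Multiset Λ → Prop :=
  Relation.ReflTransGen (RStep Γ)

/-- A configuration is terminal if no rule of `Γ` is applicable to it. -/
def Terminal {Λ : Type} (Γ : Finset (Rule Λ)) (C : Multiset Λ) : Prop :=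
  ∀ R ∈ Γ, ¬ R.reactants ≤ C

/-- The set of terminal configurations reachable from `S` after adding `s` (one step). -/
def stepTerm {Λ : Type} [DecidableEq Λ] (Γ : Finset (Rule Λ)) (S : Set (Multiset Λ)) (s : Multiset Λ) :
    Set (Multiset Λ) :=
  {T | ∃ c ∈ S, Reaches Γ (c + s) T ∧ Terminal Γ T}

/-- `TERM_k`: terminal configurations after running the step CRN with step sequence `ss`. -/
def termAfter {Λ : Type} [DecidableEq Λ] (Γ : Finset (Rule Λ)) (ss : List (Multiset Λ)) : Set (Multiset Λ) :=
  ss.foldl (stepTerm Γ) {0}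

/-- All configurations reachable during any step, starting from terminal sets `S`. -/
def reachDuring {Λ : Type} [DecidableEq Λ] (Γ : Finset (Rule Λ)) :
    Set (Multiset Λ) → List (Multiset Λ) → Set (Multiset Λ)
  | _, [] => ∅
  | S, s :: rest =>
      {C | ∃ c ∈ S, Reaches Γ (c + s) C} ∪ reachDuring Γ (stepTerm Γ S s) rest

/-- All configurations reachable at any step of the step CRN `(Γ, ss)`. -/
def reachAll {Λ : Type} [DecidableEq Λ] (Γ : Finset (Rule Λ)) (ss : List (Multiset Λ)) : Set (Multiset Λ) :=
  reachDuring Γ {0} ss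

/-- Add the input configuration `X` to the first step of the step sequence. -/
def addToHead {Λ : Type} (X : Multiset Λ) : List (Multiset Λ) → List (Multiset Λ)
  | [] => [X]
  | s :: rest => (X + s) :: rest

set_option linter.unusedSectionVars false

section Aux
variable {Λ : Type} [DecidableEq Λ]

lemma terminal_mono {Γ : Finset (Rule Λ)} {X Y : Multiset Λ} (h : X ≤ Y)
    (hY : Terminal Γ Y) : Terminal Γ X :=
  fun R hR hle => hY R hR (hle.trans h)

lemma reaches_add {Γ : Finset (Rule Λ)} {A B : Multiset Λ} (h : Reaches Γ A B) (E : Multiset Λ) :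
    Reaches Γ (A + E) (B + E) := by
  induction h with
  | refl => exact Relation.ReflTransGen.refl
  | tail _ hstep ih =>
    obtain ⟨R, hR, hle, heq⟩ := hstep
    refine ih.tail ⟨R, hR, hle.trans (Multiset.le_add_right _ _), ?_⟩
    subst heq
    ext a
    have := Multiset.le_iff_count.mp hle a
    simp [Multiset.count_sub, Multiset.count_add]
    omega

lemma extract {X D : Multiset Λ} {u : Λ} (hcard : Multiset.card X = 2)
    (h1 : X ≤ D + {u}) (h2 : ¬ X ≤ D) :
    ∃ w, X = {u} + {w} ∧ w ∈ D := by
  rw [Multiset.le_iff_count] at h1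
  rw [Multiset.le_iff_count] at h2; push_neg at h2
  obtain ⟨s, hs⟩ := h2
  have hsu : s = u := by
    by_contra h
    have := h1 s
    simp [Multiset.count_singleton, h] at this
    omega
  rw [hsu] at hs
  have hmemu : u ∈ X := by
    rw [← Multiset.count_pos]; omega
  obtain ⟨Y, hY⟩ : ∃ Y, X = u ::ₘ Y := ⟨X.erase u, (Multiset.cons_erase hmemu).symm⟩
  subst hY
  simp at hcard
  obtain ⟨w, hw⟩ := Multiset.card_eq_one.mp hcard
  subst hw
  refine ⟨w, by rw [Multiset.singleton_add], ?_⟩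
  have h1w := h1 w
  have h1u := h1 u
  rw [← Multiset.count_pos]
  by_cases hwu : w = u
  · subst hwu
    simp [Multiset.count_singleton] at h1u ⊢
    omega
  · simp [Multiset.count_cons, Multiset.count_singleton, hwu] at h1w ⊢
    omega

lemma sum_dist_single [Fintype Λ] {f g : Λ → ℤ} (u : Λ)
    (h : ∀ s, (f s - g s).natAbs = if s = u then 1 else 0) :
    ∑ s : Λ, (f s - g s).natAbs = 1 := by
  rw [Finset.sum_congr rfl fun s _ => h s]
  simp

/-- Simulation invariant. -/
lemma sim {Γ : Finset (Rule Λ)} (hvoid : ∀ R ∈ Γ, R.IsVoid20) {C : Multiset Λ} {u : Λ}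
    {D' : Multiset Λ} (h : Reaches Γ (C + {u}) D') :
    ∃ D, Reaches Γ C D ∧ (D' = D + {u} ∨ ∃ v, D = D' + {v}) := by
  induction h with
  | refl => exact ⟨C, Relation.ReflTransGen.refl, Or.inl rfl⟩
  | tail _ hstep ih =>
    rename_i b c _
    obtain ⟨D, hD, hcase⟩ := ih
    obtain ⟨R, hR, hle, heq⟩ := hstep
    obtain ⟨hcard, hprod⟩ := hvoid R hR
    rcases hcase with h1 | ⟨v, hv⟩
    · subst h1
      by_cases hXD : R.reactants ≤ D
      · refine ⟨D - R.reactants, hD.tail ⟨R, hR, hXD, by simp [hprod]⟩, Or.inl ?_⟩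
        subst heq
        rw [hprod]
        ext a
        have := Multiset.le_iff_count.mp hXD a
        simp [Multiset.count_sub, Multiset.count_add]
        omega
      · obtain ⟨w, hX, hwD⟩ := extract hcard hle hXD
        refine ⟨D, hD, Or.inr ⟨w, ?_⟩⟩
        subst heq
        rw [hprod, hX, add_zero, tsub_add_eq_tsub_tsub, add_tsub_cancel_right,
          tsub_add_cancel_of_le (Multiset.singleton_le.mpr hwD)]
    · subst hv
      refine ⟨c + {v}, hD.tail ⟨R, hR, hle.trans (Multiset.le_add_right _ _), ?_⟩, Or.inr ⟨v, rfl⟩⟩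
      subst heq
      rw [hprod]
      ext a
      have := Multiset.le_iff_count.mp hle a
      simp [Multiset.count_sub, Multiset.count_add]
      omega

end Aux

section Main
variable {Λ : Type} [DecidableEq Λ]

lemma finish_extra {Γ : Finset (Rule Λ)} [Fintype Λ] (hvoid : ∀ R ∈ Γ, R.IsVoid20)
    {C T' : Multiset Λ} {v : Λ} (hD : Reaches Γ C (T' + {v})) (hterm : Terminal Γ T') :
    ∃ T, Reaches Γ C T ∧ Terminal Γ T ∧
      ∑ s : Λ, ((T.count s : ℤ) - (T'.count s : ℤ)).natAbs ≤ 1 := by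
  by_cases hDterm : Terminal Γ (T' + {v})
  · refine ⟨T' + {v}, hD, hDterm, le_of_eq <| sum_dist_single v fun s => ?_⟩
    simp only [Multiset.count_add, Multiset.count_singleton]
    rcases eq_or_ne s v with h | h <;> simp [h]
  · unfold Terminal at hDterm
    push_neg at hDterm
    obtain ⟨R, hR, hle⟩ := hDterm
    obtain ⟨hcard, hprod⟩ := hvoid R hR
    obtain ⟨w, hX, hwT⟩ := extract hcard hle (hterm R hR)
    refine ⟨T' - {w}, hD.tail ⟨R, hR, hle, ?_⟩,
      terminal_mono tsub_le_self hterm, le_of_eq <| sum_dist_single w fun s => ?_⟩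
    · rw [hprod, hX, add_zero, tsub_add_eq_tsub_tsub, add_tsub_cancel_right]
    · have hw := Multiset.count_pos.mpr hwT
      simp only [Multiset.count_sub, Multiset.count_singleton]
      rcases eq_or_ne s w with h | h <;> simp [h] <;> omega

end Main

/-- In a CRN whose rules are all `(2,0)` void rules, adding or removing one
copy `u` to/from a configuration `C` changes the reachable terminal configurations by at most
one copy in total: (i) every terminal configuration reachable from `C + {u}` is within total
count-distance 1 of some terminal configuration reachable from `C`, and (ii) likewise for
`C - {u}` when `C` contains a copy of `u`. -/
theorem stmt3 {Λ : Type} [Fintype Λ] [DecidableEq Λ] (Γ : Finset (Rule Λ))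
    (hvoid : ∀ R ∈ Γ, R.IsVoid20) (C : Multiset Λ) (u : Λ) :
    (∀ T', Reaches Γ (C + {u}) T' → Terminal Γ T' →
       ∃ T, Reaches Γ C T ∧ Terminal Γ T ∧
         ∑ s : Λ, ((T.count s : ℤ) - (T'.count s : ℤ)).natAbs ≤ 1) ∧
    (1 ≤ C.count u →
     ∀ T', Reaches Γ (C - {u}) T' → Terminal Γ T' →
       ∃ T, Reaches Γ C T ∧ Terminal Γ T ∧
         ∑ s : Λ, ((T.count s : ℤ) - (T'.count s : ℤ)).natAbs ≤ 1) := by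
  constructor
  · intro T' hT' hterm
    obtain ⟨D, hD, hcase⟩ := sim hvoid hT'
    rcases hcase with rfl | ⟨v, hv⟩
    · refine ⟨D, hD, terminal_mono (Multiset.le_add_right _ _) hterm,
        le_of_eq <| sum_dist_single u fun s => ?_⟩
      simp only [Multiset.count_add, Multiset.count_singleton]
      rcases eq_or_ne s u with h | h <;> simp [h]
    · subst hv
      exact finish_extra hvoid hD hterm
  · intro hu T' hT' hterm
    have hC : C - {u} + {u} = C :=
      tsub_add_cancel_of_le (Multiset.singleton_le.mpr (Multiset.count_pos.mp hu))
    have h2 : Reaches Γ C (T' + {u}) := hC ▸ reaches_add hT' {u}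
    exact finish_extra hvoid h2 hterm
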